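/- Let q_n, q_{n+1}, q_{n+2} : ℝ × ℝ → ℂ be smooth functions of (ξ,η) such that ∂²q_{n+1}/∂ξ∂η = (1/4)(e^{q_{n+2}−q_{n+1}} − e^{q_{n+1}−q_n}). Set Q₁ := −e^{−q_n}, Q₂ := e^{q_{n+1}}, Q₁⁺ := −e^{−q_{n+1}}, Q₂⁺ := e^{q_{n+2}}. Suppose g₁, g₂ : ℝ × ℝ → ℂ are smooth and satisfy the nonlocality equations ∂g₁/∂ξ = −(1/2)·∂(Q₁Q₂)/∂η and ∂g₂/∂η = −(1/2)·∂(Q₁Q₂)/∂ξ. Then the shifted nonlocal variables g₁⁺ := g₁ + 2·∂²q_{n+1}/∂η² and g₂⁺ := g₂ + 2·∂²q_{n+1}/∂ξ² satisfy the nonlocality equations at the next level: ∂g₁⁺/∂ξ = −(1/2)·∂(Q₁⁺Q₂⁺)/∂η and ∂g₂⁺/∂η = −(1/2)·∂(Q₁⁺Q₂⁺)/∂ξ. -/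

import Mathlib

/-- Partial derivative in the first variable (ξ) of a function `ℝ × ℝ → ℂ`. -/
noncomputable def pdXi (f : ℝ × ℝ → ℂ) (p : ℝ × ℝ) : ℂ :=
  deriv (fun s => f (s, p.2)) p.1

/-- Partial derivative in the second variable (η) of a function `ℝ × ℝ → ℂ`. -/
noncomputable def pdEta (f : ℝ × ℝ → ℂ) (p : ℝ × ℝ) : ℂ :=
  deriv (fun s => f (p.1, s)) p.2


lemma hasDerivAt_sliceXi {f : ℝ × ℝ → ℂ} (hf : ContDiff ℝ (⊤ : ℕ∞) f) (p : ℝ × ℝ) :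
    HasDerivAt (fun s => f (s, p.2)) (pdXi f p) p.1 := by
  have h1 : DifferentiableAt ℝ f (p.1, p.2) := (hf.differentiable (by simp)) _
  have : DifferentiableAt ℝ (fun s => f (s, p.2)) p.1 :=
    h1.comp p.1 (differentiableAt_id.prodMk (differentiableAt_const _))
  exact this.hasDerivAt

lemma hasDerivAt_sliceEta {f : ℝ × ℝ → ℂ} (hf : ContDiff ℝ (⊤ : ℕ∞) f) (p : ℝ × ℝ) :
    HasDerivAt (fun s => f (p.1, s)) (pdEta f p) p.2 := by
  have h1 : DifferentiableAt ℝ f (p.1, p.2) := (hf.differentiable (by simp)) _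
  have : DifferentiableAt ℝ (fun s => f (p.1, s)) p.2 :=
    h1.comp p.2 ((differentiableAt_const _).prodMk differentiableAt_id)
  exact this.hasDerivAt

lemma pdXi_eq {f : ℝ × ℝ → ℂ} (hf : ContDiff ℝ (⊤ : ℕ∞) f) (p : ℝ × ℝ) :
    pdXi f p = fderiv ℝ f p ((1 : ℝ), (0 : ℝ)) := by
  have hline : HasDerivAt (fun s : ℝ => ((s, p.2) : ℝ × ℝ)) ((1 : ℝ), (0 : ℝ)) p.1 :=
    (hasDerivAt_id p.1).prodMk (hasDerivAt_const p.1 p.2)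
  have h := (((hf.differentiable (by simp)) (p.1, p.2)).hasFDerivAt).comp_hasDerivAt p.1 hline
  simpa [pdXi, Function.comp_def] using h.deriv

lemma pdEta_eq {f : ℝ × ℝ → ℂ} (hf : ContDiff ℝ (⊤ : ℕ∞) f) (p : ℝ × ℝ) :
    pdEta f p = fderiv ℝ f p ((0 : ℝ), (1 : ℝ)) := by
  have hline : HasDerivAt (fun s : ℝ => ((p.1, s) : ℝ × ℝ)) ((0 : ℝ), (1 : ℝ)) p.2 :=
    (hasDerivAt_const p.2 p.1).prodMk (hasDerivAt_id p.2)
  have h := (((hf.differentiable (by simp)) (p.1, p.2)).hasFDerivAt).comp_hasDerivAt p.2 hline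
  simpa [pdEta, Function.comp_def] using h.deriv

lemma contDiff_pdXi {f : ℝ × ℝ → ℂ} (hf : ContDiff ℝ (⊤ : ℕ∞) f) :
    ContDiff ℝ (⊤ : ℕ∞) (pdXi f) := by
  have h : pdXi f = fun p => fderiv ℝ f p ((1 : ℝ), (0 : ℝ)) := funext (pdXi_eq hf)
  rw [h]
  exact (hf.fderiv_right (by exact_mod_cast le_top)).clm_apply contDiff_const

lemma contDiff_pdEta {f : ℝ × ℝ → ℂ} (hf : ContDiff ℝ (⊤ : ℕ∞) f) :
    ContDiff ℝ (⊤ : ℕ∞) (pdEta f) := by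
  have h : pdEta f = fun p => fderiv ℝ f p ((0 : ℝ), (1 : ℝ)) := funext (pdEta_eq hf)
  rw [h]
  exact (hf.fderiv_right (by exact_mod_cast le_top)).clm_apply contDiff_const

lemma mixed_eq {f : ℝ × ℝ → ℂ} (hf : ContDiff ℝ (⊤ : ℕ∞) f) (p : ℝ × ℝ) (v w : ℝ × ℝ) :
    fderiv ℝ (fun q => fderiv ℝ f q w) p v = fderiv ℝ (fderiv ℝ f) p v w := by
  have hd2 : HasFDerivAt (fderiv ℝ f) (fderiv ℝ (fderiv ℝ f) p) p :=
    (((hf.fderiv_right (m := ((⊤:ℕ∞) : WithTop ℕ∞)) (by exact_mod_cast le_top)).differentiable (by simp)) p).hasFDerivAt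
  have h := (ContinuousLinearMap.apply ℝ ℂ w).hasFDerivAt.comp p hd2
  have h2 : fderiv ℝ (fun q => fderiv ℝ f q w) p =
      (ContinuousLinearMap.apply ℝ ℂ w).comp (fderiv ℝ (fderiv ℝ f) p) := by
    have := h.fderiv
    simpa [Function.comp_def] using this
  rw [h2]; rfl

lemma pd_comm {f : ℝ × ℝ → ℂ} (hf : ContDiff ℝ (⊤ : ℕ∞) f) (p : ℝ × ℝ) :
    pdXi (pdEta f) p = pdEta (pdXi f) p := by
  have hd2 : HasFDerivAt (fderiv ℝ f) (fderiv ℝ (fderiv ℝ f) p) p :=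
    (((hf.fderiv_right (m := ((⊤:ℕ∞) : WithTop ℕ∞)) (by exact_mod_cast le_top)).differentiable (by simp)) p).hasFDerivAt
  have hsym := second_derivative_symmetric
    (fun y => ((hf.differentiable (by simp)) y).hasFDerivAt) hd2
    ((1 : ℝ), (0 : ℝ)) ((0 : ℝ), (1 : ℝ))
  have e1 : pdEta f = fun q => fderiv ℝ f q ((0 : ℝ), (1 : ℝ)) := funext (pdEta_eq hf)
  have e2 : pdXi f = fun q => fderiv ℝ f q ((1 : ℝ), (0 : ℝ)) := funext (pdXi_eq hf)
  rw [pdXi_eq (contDiff_pdEta hf), pdEta_eq (contDiff_pdXi hf), e1, e2,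
    mixed_eq hf, mixed_eq hf, hsym]

/-- The shifted nonlocal variables satisfy the nonlocality
equations at the next level of the Bäcklund transformation. -/
theorem backlund_nonlocal_variables
    (qn qn1 qn2 : ℝ × ℝ → ℂ)
    (hqn : ContDiff ℝ (⊤ : ℕ∞) qn)
    (hqn1 : ContDiff ℝ (⊤ : ℕ∞) qn1)
    (hqn2 : ContDiff ℝ (⊤ : ℕ∞) qn2)
    (hToda : ∀ p, pdXi (pdEta qn1) p =
      (1 / 4) * (Complex.exp (qn2 p - qn1 p) - Complex.exp (qn1 p - qn p)))
    (Q₁ Q₂ Q₁p Q₂p : ℝ × ℝ → ℂ)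
    (hQ₁ : ∀ p, Q₁ p = -Complex.exp (-qn p))
    (hQ₂ : ∀ p, Q₂ p = Complex.exp (qn1 p))
    (hQ₁p : ∀ p, Q₁p p = -Complex.exp (-qn1 p))
    (hQ₂p : ∀ p, Q₂p p = Complex.exp (qn2 p))
    (g₁ g₂ : ℝ × ℝ → ℂ)
    (hg₁s : ContDiff ℝ (⊤ : ℕ∞) g₁)
    (hg₂s : ContDiff ℝ (⊤ : ℕ∞) g₂)
    (hg₁ : ∀ p, pdXi g₁ p = -(1 / 2) * pdEta (fun r => Q₁ r * Q₂ r) p)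
    (hg₂ : ∀ p, pdEta g₂ p = -(1 / 2) * pdXi (fun r => Q₁ r * Q₂ r) p)
    (g₁p g₂p : ℝ × ℝ → ℂ)
    (hg₁p : ∀ p, g₁p p = g₁ p + 2 * pdEta (pdEta qn1) p)
    (hg₂p : ∀ p, g₂p p = g₂ p + 2 * pdXi (pdXi qn1) p) :
    (∀ p, pdXi g₁p p = -(1 / 2) * pdEta (fun r => Q₁p r * Q₂p r) p) ∧
    (∀ p, pdEta g₂p p = -(1 / 2) * pdXi (fun r => Q₁p r * Q₂p r) p) := by
  have hE1s : ContDiff ℝ (⊤ : ℕ∞) (fun r => Complex.exp (qn1 r - qn r)) := (hqn1.sub hqn).cexp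
  have hE2s : ContDiff ℝ (⊤ : ℕ∞) (fun r => Complex.exp (qn2 r - qn1 r)) := (hqn2.sub hqn1).cexp
  have hQQ : (fun r => Q₁ r * Q₂ r) = fun r => -Complex.exp (qn1 r - qn r) := by
    funext r; rw [hQ₁, hQ₂, neg_mul, ← Complex.exp_add, neg_add_eq_sub]
  have hQQp : (fun r => Q₁p r * Q₂p r) = fun r => -Complex.exp (qn2 r - qn1 r) := by
    funext r; rw [hQ₁p, hQ₂p, neg_mul, ← Complex.exp_add, neg_add_eq_sub]
  have hT : pdXi (pdEta qn1) =
      fun p => (1 / 4) * (Complex.exp (qn2 p - qn1 p) - Complex.exp (qn1 p - qn p)) :=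
    funext hToda
  constructor
  · intro p
    have h1 := hasDerivAt_sliceEta hE1s p
    have h2 := hasDerivAt_sliceEta hE2s p
    have hA : pdEta (fun r => -Complex.exp (qn1 r - qn r)) p
        = -(pdEta (fun r => Complex.exp (qn1 r - qn r)) p) := h1.neg.deriv
    have hB : pdEta (fun p => (1 / 4) * (Complex.exp (qn2 p - qn1 p)
          - Complex.exp (qn1 p - qn p))) p
        = (1 / 4) * (pdEta (fun r => Complex.exp (qn2 r - qn1 r)) p
          - pdEta (fun r => Complex.exp (qn1 r - qn r)) p) :=
      ((h2.sub h1).const_mul (1 / 4 : ℂ)).deriv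
    have hC : pdEta (fun r => -Complex.exp (qn2 r - qn1 r)) p
        = -(pdEta (fun r => Complex.exp (qn2 r - qn1 r)) p) := h2.neg.deriv
    have hg₁pf : g₁p = fun r => g₁ r + 2 * pdEta (pdEta qn1) r := funext hg₁p
    have hD : ContDiff ℝ (⊤ : ℕ∞) (pdEta (pdEta qn1)) := contDiff_pdEta (contDiff_pdEta hqn1)
    have hx1 := hasDerivAt_sliceXi hg₁s p
    have hx2 := hasDerivAt_sliceXi hD p
    have hLHS : pdXi g₁p p = pdXi g₁ p + 2 * pdXi (pdEta (pdEta qn1)) p := by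
      rw [hg₁pf]
      exact (hx1.add (hx2.const_mul (2 : ℂ))).deriv
    have hcomm : pdXi (pdEta (pdEta qn1)) p = pdEta (pdXi (pdEta qn1)) p :=
      pd_comm (contDiff_pdEta hqn1) p
    rw [hLHS, hg₁ p, hQQ, hA, hcomm, hT, hB, hQQp, hC]
    ring
  · intro p
    have h1 := hasDerivAt_sliceXi hE1s p
    have h2 := hasDerivAt_sliceXi hE2s p
    have hB : pdXi (fun p => (1 / 4) * (Complex.exp (qn2 p - qn1 p)
          - Complex.exp (qn1 p - qn p))) p
        = (1 / 4) * (pdXi (fun r => Complex.exp (qn2 r - qn1 r)) p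
          - pdXi (fun r => Complex.exp (qn1 r - qn r)) p) :=
      ((h2.sub h1).const_mul (1 / 4 : ℂ)).deriv
    have hA : pdXi (fun r => -Complex.exp (qn1 r - qn r)) p
        = -(pdXi (fun r => Complex.exp (qn1 r - qn r)) p) := h1.neg.deriv
    have hC : pdXi (fun r => -Complex.exp (qn2 r - qn1 r)) p
        = -(pdXi (fun r => Complex.exp (qn2 r - qn1 r)) p) := h2.neg.deriv
    have hg₂pf : g₂p = fun r => g₂ r + 2 * pdXi (pdXi qn1) r := funext hg₂p
    have hD : ContDiff ℝ (⊤ : ℕ∞) (pdXi (pdXi qn1)) := contDiff_pdXi (contDiff_pdXi hqn1)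
    have hx1 := hasDerivAt_sliceEta hg₂s p
    have hx2 := hasDerivAt_sliceEta hD p
    have hLHS : pdEta g₂p p = pdEta g₂ p + 2 * pdEta (pdXi (pdXi qn1)) p := by
      rw [hg₂pf]
      exact (hx1.add (hx2.const_mul (2 : ℂ))).deriv
    have hswap : pdEta (pdXi qn1) = pdXi (pdEta qn1) := funext fun q => (pd_comm hqn1 q).symm
    have hcomm : pdEta (pdXi (pdXi qn1)) p = pdXi (pdEta (pdXi qn1)) p :=
      (pd_comm (contDiff_pdXi hqn1) p).symm
    rw [hLHS, hg₂ p, hQQ, hA, hcomm, hswap, hT, hB, hQQp, hC]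
    ring
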